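/- arXiv:2308.14476 — 2 statements merged into one kernel-verified Lean document; each statement's English description precedes it below -/
import Mathlib

section
/- (Proposition 2 of the paper, after Vidal et al.) For every visit sequence σ, let E(σ) and L(σ) be the unique real numbers such that D_σ(t) = D(σ) + max{E(σ) − t, 0} and TW_σ(t) = TW(σ) + max{t − L(σ), 0} for all t ∈ ℝ. Then E(σ) ≤ L(σ), and the set of start times t that simultaneously minimize both the duration D_σ and the time warp TW_σ is exactly the nonempty segment [E(σ), L(σ)]. -/
/-!
Clamping `a` into `[e, l]` adds the waiting time `max (e - a) 0` and removes the time warp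
`max (a - l) 0`, so by induction along the sequence the end of service of the last visit is
`t + D_σ(t) - TW_σ(t)`, which is monotone in `t`. If `L < E`, this quantity would be
`E + D(σ) - TW(σ)` at `t = L` but only `L + D(σ) - TW(σ)` at `t = E`. The common minimizers
are then read off the two piecewise-linear formulas.
-/

/-- Arrival times of a visit sequence started at time `t`:
`a 0 = t`, `a (k+1) = s k + μ k + δ k` where `s k = min (max (a k) (e k)) (l k)`. -/
noncomputable def arrive (μ e l δ : ℕ → ℝ) (t : ℝ) : ℕ → ℝ
  | 0 => t
  | k + 1 => min (max (arrive μ e l δ t k) (e k)) (l k) + μ k + δ k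

/-- Service start times with time warp. -/
noncomputable def serve (μ e l δ : ℕ → ℝ) (t : ℝ) (k : ℕ) : ℝ :=
  min (max (arrive μ e l δ t k) (e k)) (l k)

/-- Total time warp of a visit sequence of length `n+1` started at time `t`. -/
noncomputable def timeWarp (n : ℕ) (μ e l δ : ℕ → ℝ) (t : ℝ) : ℝ :=
  ∑ k ∈ Finset.range (n + 1), max (arrive μ e l δ t k - l k) 0

/-- Total waiting time of a visit sequence of length `n+1` started at time `t`. -/
noncomputable def waiting (n : ℕ) (μ e l δ : ℕ → ℝ) (t : ℝ) : ℝ :=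
  ∑ k ∈ Finset.range (n + 1), max (e k - arrive μ e l δ t k) 0

/-- Duration of a visit sequence of length `n+1` started at time `t`. -/
noncomputable def duration (n : ℕ) (μ e l δ : ℕ → ℝ) (t : ℝ) : ℝ :=
  (∑ k ∈ Finset.range (n + 1), μ k) + (∑ k ∈ Finset.range n, δ k) +
    waiting n μ e l δ t

theorem min_max_eq_add_sub (a e l : ℝ) (hel : e ≤ l) :
    min (max a e) l = a + max (e - a) 0 - max (a - l) 0 := by
  rcases le_total a e with hae | hea <;> rcases le_total a l with hal | hla <;>
    simp only [max_def, min_def] <;> split_ifs <;> linarith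

theorem arrive_mono (μ e l δ : ℕ → ℝ) {t u : ℝ} (htu : t ≤ u) (k : ℕ) :
    arrive μ e l δ t k ≤ arrive μ e l δ u k := by
  induction k with
  | zero => exact htu
  | succ k ih =>
    simp only [arrive]
    gcongr

theorem serve_mono (μ e l δ : ℕ → ℝ) {t u : ℝ} (htu : t ≤ u) (k : ℕ) :
    serve μ e l δ t k ≤ serve μ e l δ u k := by
  unfold serve
  gcongr
  exact arrive_mono μ e l δ htu k

theorem serve_add_eq_add_duration_sub_timeWarp (n : ℕ) (μ e l δ : ℕ → ℝ)
    (hel : ∀ k ≤ n, e k ≤ l k) (t : ℝ) :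
    serve μ e l δ t n + μ n = t + duration n μ e l δ t - timeWarp n μ e l δ t := by
  induction n with
  | zero =>
    simp only [serve, duration, waiting, timeWarp, zero_add, Finset.sum_range_one,
      Finset.range_zero, Finset.sum_empty, arrive, min_max_eq_add_sub _ _ _ (hel 0 le_rfl)]
    ring
  | succ n ih =>
    have ih := ih fun k hk => hel k (hk.trans n.le_succ)
    set a := arrive μ e l δ t (n + 1)
    have harrive : a = serve μ e l δ t n + μ n + δ n := rfl
    have hserve : serve μ e l δ t (n + 1) = a + max (e (n + 1) - a) 0 - max (a - l (n + 1)) 0 :=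
      min_max_eq_add_sub _ _ _ (hel (n + 1) le_rfl)
    have hduration : duration (n + 1) μ e l δ t =
        duration n μ e l δ t + μ (n + 1) + δ n + max (e (n + 1) - a) 0 := by
      simp only [duration, waiting, Finset.sum_range_succ]
      ring
    have htimeWarp :
        timeWarp (n + 1) μ e l δ t = timeWarp n μ e l δ t + max (a - l (n + 1)) 0 :=
      Finset.sum_range_succ _ _
    linarith

theorem forall_le_iff_of_eq_add_max_sub_left {f : ℝ → ℝ} {c E : ℝ}
    (hf : ∀ t, f t = c + max (E - t) 0) (t : ℝ) : (∀ u, f t ≤ f u) ↔ E ≤ t := by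
  simp only [hf, add_le_add_iff_left]
  refine ⟨fun h => ?_, fun hEt u => ?_⟩
  · simpa [sub_nonpos] using h E
  · rw [max_eq_right (sub_nonpos.2 hEt)]
    exact le_max_right _ _

theorem forall_le_iff_of_eq_add_max_sub_right {f : ℝ → ℝ} {c L : ℝ}
    (hf : ∀ t, f t = c + max (t - L) 0) (t : ℝ) : (∀ u, f t ≤ f u) ↔ t ≤ L := by
  simp only [hf, add_le_add_iff_left]
  refine ⟨fun h => ?_, fun htL u => ?_⟩
  · simpa [sub_nonpos] using h L
  · rw [max_eq_right (sub_nonpos.2 htL)]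
    exact le_max_right _ _

theorem optimal_start_times_segment_general
    (n : ℕ) (μ e l δ : ℕ → ℝ)
    (hel : ∀ k ≤ n, e k ≤ l k)
    (Dmin TWmin E L : ℝ)
    (hD : ∀ t : ℝ, duration n μ e l δ t = Dmin + max (E - t) 0)
    (hTW : ∀ t : ℝ, timeWarp n μ e l δ t = TWmin + max (t - L) 0) :
    E ≤ L ∧
    { t : ℝ | (∀ u : ℝ, duration n μ e l δ t ≤ duration n μ e l δ u) ∧
              (∀ u : ℝ, timeWarp n μ e l δ t ≤ timeWarp n μ e l δ u) } =
      Set.Icc E L := by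
  have hEL : E ≤ L := by
    by_contra! hLE
    have hL := serve_add_eq_add_duration_sub_timeWarp n μ e l δ hel L
    have hE := serve_add_eq_add_duration_sub_timeWarp n μ e l δ hel E
    rw [hD, hTW, sub_self, max_self, max_eq_left (sub_nonneg.2 hLE.le)] at hL hE
    linarith [serve_mono μ e l δ hLE.le n]
  refine ⟨hEL, Set.ext fun t => ?_⟩
  rw [Set.mem_ofPred_eq, forall_le_iff_of_eq_add_max_sub_left hD,
    forall_le_iff_of_eq_add_max_sub_right hTW, Set.mem_Icc]

/-- Proposition 2: E(σ) ≤ L(σ), and the set of start times that simultaneously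
minimize both the duration and the time warp is exactly the nonempty segment
[E(σ), L(σ)]. -/
theorem optimal_start_times_segment
    (n : ℕ) (μ e l δ : ℕ → ℝ)
    (hμ : ∀ k ≤ n, 0 ≤ μ k) (hel : ∀ k ≤ n, e k ≤ l k) (hδ : ∀ k < n, 0 ≤ δ k)
    (Dmin TWmin E L : ℝ)
    (hD : ∀ t : ℝ, duration n μ e l δ t = Dmin + max (E - t) 0)
    (hTW : ∀ t : ℝ, timeWarp n μ e l δ t = TWmin + max (t - L) 0) :
    E ≤ L ∧
    { t : ℝ | (∀ u : ℝ, duration n μ e l δ t ≤ duration n μ e l δ u) ∧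
              (∀ u : ℝ, timeWarp n μ e l δ t ≤ timeWarp n μ e l δ u) } =
      Set.Icc E L :=
  optimal_start_times_segment_general n μ e l δ hel Dmin TWmin E L hD hTW
end

section
/- (Proposition 1 of the paper, time-warp part, after Vidal et al.) Let σ and σ′ be visit sequences whose duration and time-warp functions have the representations D_σ(t) = D(σ) + max{E(σ) − t, 0}, TW_σ(t) = TW(σ) + max{t − L(σ), 0}, D_{σ′}(t) = D(σ′) + max{E(σ′) − t, 0}, TW_{σ′}(t) = TW(σ′) + max{t − L(σ′), 0} for all t ∈ ℝ, with E(σ) ≤ L(σ) and E(σ′) ≤ L(σ′). Let δ ≥ 0 be the connecting travel time, and set Δ = D(σ) − TW(σ) + δ and Δ_TW = max{E(σ) + Δ − L(σ′), 0}. Then for all t ∈ ℝ, the time warp of the concatenation satisfies TW_{σ⊕δ⊕σ′}(t) = TW'' + max{t − L'', 0}, where TW'' = TW(σ) + TW(σ′) + Δ_TW and L'' = min{L(σ′) − Δ, L(σ)} + Δ_TW. -/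
/-- Visit data of the concatenation `σ ⊕ δ ⊕ σ′`: the first `m+1` visits come
from `σ` (data `f`), the remaining ones from `σ′` (data `f'`). -/
noncomputable def catV (m : ℕ) (f f' : ℕ → ℝ) (k : ℕ) : ℝ :=
  if k ≤ m then f k else f' (k - (m + 1))

/-- Travel times of the concatenation `σ ⊕ δ ⊕ σ′`: the first `m` edges come from
`σ`, the connecting edge from visit `m` to visit `m+1` has travel time `c`, and
the remaining edges come from `σ′`. -/
noncomputable def catE (m : ℕ) (δ δ' : ℕ → ℝ) (c : ℝ) (k : ℕ) : ℝ :=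
  if k < m then δ k else if k = m then c else δ' (k - (m + 1))

/-!
The concatenation runs through `σ` exactly as `σ` alone does and then runs like `σ′` started at
the end of the connecting trip, so its time warp is `TW_σ(t) + TW_σ′(d(t))` with `d(t)` that
moment. Since a service start is the arrival time plus the waiting time minus the time warp,
`d(t) = t + D_σ(t) - TW_σ(t) + δ`, which the representations turn into
`min (max t E(σ)) L(σ) + Δ`; what is left is a piecewise-linear identity in `t`.
-/

lemma clamp_eq_add_max_sub_max {a b : ℝ} (hab : a ≤ b) (t : ℝ) :
    min (max t a) b = t + max (a - t) 0 - max (t - b) 0 := by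
  rcases le_total t a with hta | hat
  · rw [max_eq_right hta, min_eq_left hab, max_eq_left (sub_nonneg.2 hta),
      max_eq_right (by linarith)]
    ring
  · rw [max_eq_left hat, max_eq_right (sub_nonpos.2 hat)]
    rcases le_total t b with htb | hbt
    · rw [min_eq_left htb, max_eq_right (sub_nonpos.2 htb)]; ring
    · rw [min_eq_right hbt, max_eq_left (sub_nonneg.2 hbt)]; ring

lemma max_sub_add_max_clamp_sub {a b : ℝ} (hab : a ≤ b) (c d t : ℝ) :
    max (t - b) 0 + max (min (max t a) b + d - c) 0 =
      max (a + d - c) 0 + max (t - (min (c - d) b + max (a + d - c) 0)) 0 := by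
  simp only [max_def, min_def]
  split_ifs <;> linarith

section VisitSequence

variable (μ e l δ : ℕ → ℝ)

lemma serve_add_eq_duration_sub_timeWarp {n : ℕ} (hel : ∀ k ≤ n, e k ≤ l k) (t : ℝ) :
    serve μ e l δ t n + μ n = t + duration n μ e l δ t - timeWarp n μ e l δ t := by
  induction n with
  | zero =>
    simp only [serve, arrive, clamp_eq_add_max_sub_max (hel 0 le_rfl), duration, waiting,
      timeWarp, zero_add, Finset.sum_range_one, Finset.sum_range_zero]
    ring
  | succ n ih =>
    have hserve : serve μ e l δ t (n + 1) = serve μ e l δ t n + μ n + δ n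
        + max (e (n + 1) - arrive μ e l δ t (n + 1)) 0
        - max (arrive μ e l δ t (n + 1) - l (n + 1)) 0 := by
      rw [serve, clamp_eq_add_max_sub_max (hel _ le_rfl)]; rfl
    rw [hserve, ih fun k hk => hel k (hk.trans n.le_succ)]
    simp only [duration, waiting, timeWarp, Finset.sum_range_succ _ (n + 1),
      Finset.sum_range_succ δ n]
    ring

variable (μ' e' l' δ' : ℕ → ℝ) (m : ℕ) (c t : ℝ)

lemma arrive_cat_of_le {k : ℕ} (hk : k ≤ m) :
    arrive (catV m μ μ') (catV m e e') (catV m l l') (catE m δ δ' c) t k =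
      arrive μ e l δ t k := by
  induction k with
  | zero => rfl
  | succ k ih =>
    have hkm : k < m := hk
    simp [arrive, ih hkm.le, catV, hkm.le, catE, hkm]

lemma arrive_cat_add (j : ℕ) :
    arrive (catV m μ μ') (catV m e e') (catV m l l') (catE m δ δ' c) t (m + 1 + j) =
      arrive μ' e' l' δ' (serve μ e l δ t m + μ m + c) j := by
  induction j with
  | zero =>
    simp [arrive, arrive_cat_of_le μ e l δ μ' e' l' δ' m c t le_rfl, catV, catE, serve]
  | succ j ih =>
    have hnot_le : ¬ m + 1 + j ≤ m := by omega
    have hnot_lt : ¬ m + 1 + j < m := by omega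
    have hne : m + 1 + j ≠ m := by omega
    rw [← add_assoc, arrive, ih]
    simp [catV, catE, hnot_le, hnot_lt, hne, arrive]

lemma timeWarp_cat (n : ℕ) :
    timeWarp (m + n + 1) (catV m μ μ') (catV m e e') (catV m l l') (catE m δ δ' c) t =
      timeWarp m μ e l δ t + timeWarp n μ' e' l' δ' (serve μ e l δ t m + μ m + c) := by
  rw [timeWarp, show m + n + 1 + 1 = (m + 1) + (n + 1) by ring, Finset.sum_range_add]
  congr 1
  · refine Finset.sum_congr rfl fun k hk => ?_
    have hkm : k ≤ m := Nat.lt_succ_iff.1 (Finset.mem_range.1 hk)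
    rw [arrive_cat_of_le μ e l δ μ' e' l' δ' m c t hkm]
    simp [catV, hkm]
  · refine Finset.sum_congr rfl fun j _ => ?_
    rw [arrive_cat_add]
    simp [catV, show ¬ m + 1 + j ≤ m by omega]

end VisitSequence

theorem concat_timeWarp_representation_general
    (m n : ℕ) (μ e l δ μ' e' l' δ' : ℕ → ℝ) (c : ℝ)
    (hel : ∀ k ≤ m, e k ≤ l k)
    (Dσ TWσ Eσ Lσ TWσ' Lσ' : ℝ)
    (hDσ : ∀ t : ℝ, duration m μ e l δ t = Dσ + max (Eσ - t) 0)
    (hTWσ : ∀ t : ℝ, timeWarp m μ e l δ t = TWσ + max (t - Lσ) 0)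
    (hTWσ' : ∀ t : ℝ, timeWarp n μ' e' l' δ' t = TWσ' + max (t - Lσ') 0)
    (hEL : Eσ ≤ Lσ)
    (Δ ΔTW TW'' L'' : ℝ)
    (hΔ : Δ = Dσ - TWσ + c)
    (hΔTW : ΔTW = max (Eσ + Δ - Lσ') 0)
    (hTW'' : TW'' = TWσ + TWσ' + ΔTW)
    (hL'' : L'' = min (Lσ' - Δ) Lσ + ΔTW) :
    ∀ t : ℝ,
      timeWarp (m + n + 1) (catV m μ μ') (catV m e e') (catV m l l')
          (catE m δ δ' c) t =
        TW'' + max (t - L'') 0 := by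
  intro t
  have hdepart : serve μ e l δ t m + μ m + c = min (max t Eσ) Lσ + Δ := by
    rw [serve_add_eq_duration_sub_timeWarp μ e l δ hel, hDσ, hTWσ, hΔ,
      clamp_eq_add_max_sub_max hEL]
    ring
  rw [timeWarp_cat, hTWσ, hTWσ', hdepart, hTW'', hL'', hΔTW]
  linear_combination max_sub_add_max_clamp_sub hEL Lσ' Δ t

/-- Proposition 1 (time-warp part): with Δ = D(σ) - TW(σ) + δ and
Δ_TW = max (E(σ) + Δ - L(σ′)) 0, the time warp of the concatenation satisfies
TW(t) = TW'' + max (t - L'') 0 where TW'' = TW(σ) + TW(σ′) + Δ_TW and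
L'' = min (L(σ′) - Δ) (L(σ)) + Δ_TW. -/
theorem concat_timeWarp_representation
    (m n : ℕ) (μ e l δ μ' e' l' δ' : ℕ → ℝ) (c : ℝ)
    (hμ : ∀ k ≤ m, 0 ≤ μ k) (hel : ∀ k ≤ m, e k ≤ l k) (hδ : ∀ k < m, 0 ≤ δ k)
    (hμ' : ∀ k ≤ n, 0 ≤ μ' k) (hel' : ∀ k ≤ n, e' k ≤ l' k)
    (hδ' : ∀ k < n, 0 ≤ δ' k) (hc : 0 ≤ c)
    (Dσ TWσ Eσ Lσ Dσ' TWσ' Eσ' Lσ' : ℝ)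
    (hDσ : ∀ t : ℝ, duration m μ e l δ t = Dσ + max (Eσ - t) 0)
    (hTWσ : ∀ t : ℝ, timeWarp m μ e l δ t = TWσ + max (t - Lσ) 0)
    (hDσ' : ∀ t : ℝ, duration n μ' e' l' δ' t = Dσ' + max (Eσ' - t) 0)
    (hTWσ' : ∀ t : ℝ, timeWarp n μ' e' l' δ' t = TWσ' + max (t - Lσ') 0)
    (hEL : Eσ ≤ Lσ) (hEL' : Eσ' ≤ Lσ')
    (Δ ΔTW TW'' L'' : ℝ)
    (hΔ : Δ = Dσ - TWσ + c)
    (hΔTW : ΔTW = max (Eσ + Δ - Lσ') 0)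
    (hTW'' : TW'' = TWσ + TWσ' + ΔTW)
    (hL'' : L'' = min (Lσ' - Δ) Lσ + ΔTW) :
    ∀ t : ℝ,
      timeWarp (m + n + 1) (catV m μ μ') (catV m e e') (catV m l l')
          (catE m δ δ' c) t =
        TW'' + max (t - L'') 0 :=
  concat_timeWarp_representation_general m n μ e l δ μ' e' l' δ' c hel Dσ TWσ Eσ Lσ TWσ' Lσ' hDσ
    hTWσ hTWσ' hEL Δ ΔTW TW'' L'' hΔ hΔTW hTW'' hL''
end
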